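/- The function α(z) = (1 − √(1−z))/(1 + √(1−z)), defined on ℂ ∖ [1,∞) (with the principal branch of the square root), is injective with inverse given by α⁻¹(z) = 4z/(1+z)², and its derivative satisfies α′(z) = α(z)/(z√(1−z)) for z ≠ 0. -/

import Mathlib

open Complex

/-- The domain `ℂ ∖ [1, ∞)`. -/
def alphaDomain : Set ℂ := {z : ℂ | ¬(z.im = 0 ∧ 1 ≤ z.re)}

/-- `α(z) = (1 - √(1-z))/(1 + √(1-z))` with the principal square root. -/
noncomputable def alphaC (z : ℂ) : ℂ :=
  (1 - (1 - z) ^ (1 / 2 : ℂ)) / (1 + (1 - z) ^ (1 / 2 : ℂ))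

lemma sqrt_re_pos {x : ℂ} (hx : 0 < x.re ∨ x.im ≠ 0) : 0 < (x ^ (1 / 2 : ℂ)).re := by
  have h : (1 / 2 : ℂ) = (2⁻¹ : ℂ) := by norm_num
  rw [h, Complex.cpow_inv_two_re]
  apply Real.sqrt_pos.mpr
  rcases hx with h | h
  · have := norm_nonneg x; nlinarith
  · have := (Complex.abs_re_lt_norm (z := x)).mpr h
    cases abs_cases x.re <;> nlinarith

lemma sqrt_sq (x : ℂ) : (x ^ (1 / 2 : ℂ)) ^ 2 = x := by
  have h : (1 / 2 : ℂ) = ((2 : ℕ) : ℂ)⁻¹ := by norm_num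
  rw [h]
  exact Complex.cpow_nat_inv_pow x two_ne_zero

lemma sq_sqrt' {w : ℂ} (hw : 0 < w.re) : (w ^ 2) ^ (1 / 2 : ℂ) = w := by
  have h2 : 0 < (w ^ 2).re ∨ (w ^ 2).im ≠ 0 := by
    by_contra hc
    push_neg at hc
    obtain ⟨h1, h2⟩ := hc
    simp only [pow_two, Complex.mul_im, Complex.mul_re] at h1 h2
    rcases mul_eq_zero.mp (by linarith : w.re * w.im = 0) with h | h
    · exact absurd h hw.ne'
    · rw [h] at h1; nlinarith
  have hre := sqrt_re_pos h2
  have hsq : ((w ^ 2) ^ (1 / 2 : ℂ)) ^ 2 = w ^ 2 := sqrt_sq _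
  rcases mul_eq_zero.mp (show ((w ^ 2) ^ (1 / 2 : ℂ) - w) * ((w ^ 2) ^ (1 / 2 : ℂ) + w) = 0 by
      linear_combination hsq) with h | h
  · exact sub_eq_zero.mp h
  · exfalso
    have heq : (w ^ 2) ^ (1 / 2 : ℂ) = -w := eq_neg_of_add_eq_zero_left h
    rw [heq] at hre
    simp only [Complex.neg_re] at hre
    linarith

lemma dom_slit {z : ℂ} (hz : z ∈ alphaDomain) : 0 < (1 - z).re ∨ (1 - z).im ≠ 0 := by
  simp only [alphaDomain, Set.mem_setOf_eq, not_and] at hz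
  simp only [Complex.sub_re, Complex.sub_im, Complex.one_re, Complex.one_im]
  by_cases h : z.im = 0
  · left; linarith [lt_of_not_ge (hz h)]
  · right; simpa using h

lemma inv_formula {z : ℂ} (hz : z ∈ alphaDomain) :
    4 * alphaC z / (1 + alphaC z) ^ 2 = z := by
  set w := (1 - z) ^ (1 / 2 : ℂ) with hw
  have hwre : 0 < w.re := sqrt_re_pos (dom_slit hz)
  have hw2 : w ^ 2 = 1 - z := sqrt_sq _
  have h1w : 1 + w ≠ 0 := by
    intro h
    have : w = -1 := by linear_combination h
    rw [this] at hwre; norm_num at hwre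
  have halpha : alphaC z = (1 - w) / (1 + w) := rfl
  have h1a : 1 + alphaC z = 2 / (1 + w) := by
    rw [halpha]; field_simp; ring
  have key : 1 + (1 - w) / (1 + w) = 2 / (1 + w) := by field_simp; ring
  rw [halpha, key]
  field_simp
  linear_combination (-4 : ℂ) * hw2

theorem stmt8 :
    Set.InjOn alphaC alphaDomain ∧
    (∀ z : ℂ, ‖z‖ < 1 → alphaC (4 * z / (1 + z) ^ 2) = z) ∧
    (∀ z ∈ alphaDomain, 4 * alphaC z / (1 + alphaC z) ^ 2 = z) ∧
    (∀ z ∈ alphaDomain, z ≠ 0 →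
      HasDerivAt alphaC (alphaC z / (z * (1 - z) ^ (1 / 2 : ℂ))) z) := by
  refine ⟨?_, ?_, fun z hz => inv_formula hz, ?_⟩
  · intro z1 hz1 z2 hz2 heq
    have e1 := inv_formula hz1
    have e2 := inv_formula hz2
    rw [heq] at e1
    exact e1.symm.trans e2
  · intro z hzn
    have h1z : (1 : ℂ) + z ≠ 0 := by
      intro h
      have : z = -1 := by linear_combination h
      rw [this] at hzn; norm_num at hzn
    set w0 := (1 - z) / (1 + z) with hw0def
    have hnsq : Complex.normSq z < 1 := by
      rw [Complex.normSq_eq_norm_sq]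
      have habs : ‖z‖ < 1 := by simpa using hzn
      nlinarith [norm_nonneg z]
    have hre : 0 < w0.re := by
      rw [hw0def, Complex.div_re]
      have hpos : 0 < Complex.normSq (1 + z) := Complex.normSq_pos.mpr h1z
      have : (1 - z).re * (1 + z).re + (1 - z).im * (1 + z).im = 1 - Complex.normSq z := by
        simp [Complex.normSq_apply]; ring
      rw [← add_div, this]
      exact div_pos (by linarith) hpos
    have hu : 1 - 4 * z / (1 + z) ^ 2 = w0 ^ 2 := by
      rw [hw0def]; field_simp; ring
    rw [alphaC, hu, sq_sqrt' hre, hw0def]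
    have hn : 1 - (1 - z) / (1 + z) = 2 * z / (1 + z) := by field_simp; ring
    have hd : 1 + (1 - z) / (1 + z) = 2 / (1 + z) := by field_simp; ring
    have h2 : (2 : ℂ) / (1 + z) ≠ 0 := by simp [h1z]
    rw [hn, hd, div_eq_iff h2]
    field_simp
  · intro z hz hz0
    have hsl := dom_slit hz
    set w := (1 - z) ^ (1 / 2 : ℂ) with hwdef
    have hwre : 0 < w.re := sqrt_re_pos hsl
    have hw2 : w ^ 2 = 1 - z := sqrt_sq _
    have hw0 : w ≠ 0 := by
      intro h; rw [h] at hwre; simp at hwre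
    have h1w : 1 + w ≠ 0 := by
      intro h
      have : w = -1 := by linear_combination h
      rw [this] at hwre; norm_num at hwre
    have hd1 : HasDerivAt (fun x : ℂ => 1 - x) (-1) z := (hasDerivAt_id z).const_sub 1
    have hd2 : HasDerivAt (fun x : ℂ => (1 - x) ^ (1 / 2 : ℂ))
        ((1 / 2 : ℂ) * (1 - z) ^ ((1 / 2 : ℂ) - 1) * (-1)) z :=
      hd1.cpow_const (Complex.mem_slitPlane_iff.mpr hsl)
    have hpow : (1 - z) ^ ((1 / 2 : ℂ) - 1) = w⁻¹ := by
      rw [show ((1 / 2 : ℂ) - 1) = -(1 / 2 : ℂ) by norm_num, Complex.cpow_neg, hwdef]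
    rw [hpow] at hd2
    have hdn : HasDerivAt (fun x : ℂ => 1 - (1 - x) ^ (1 / 2 : ℂ))
        (-((1 / 2 : ℂ) * w⁻¹ * (-1))) z := hd2.const_sub 1
    have hdd : HasDerivAt (fun x : ℂ => 1 + (1 - x) ^ (1 / 2 : ℂ))
        ((1 / 2 : ℂ) * w⁻¹ * (-1)) z := hd2.const_add 1
    have hdiv := hdn.div hdd (by rw [← hwdef]; exact h1w)
    have hval : (-((1 / 2 : ℂ) * w⁻¹ * (-1)) * (1 + (1 - z) ^ (1 / 2 : ℂ)) -
          (1 - (1 - z) ^ (1 / 2 : ℂ)) * ((1 / 2 : ℂ) * w⁻¹ * (-1))) /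
          (1 + (1 - z) ^ (1 / 2 : ℂ)) ^ 2
        = alphaC z / (z * (1 - z) ^ (1 / 2 : ℂ)) := by
      rw [← hwdef, alphaC, ← hwdef]
      have hz' : z = (1 - w) * (1 + w) := by linear_combination hw2
      rw [hz']
      have h1mw : 1 - w ≠ 0 := by
        intro h
        have hwe : w = 1 := by linear_combination -h
        rw [hz', hwe] at hz0; simp at hz0
      field_simp
      ring
    rw [hval] at hdiv
    exact hdiv
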